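/- In the N-parameter frozen percolation process on the square lattice, if the final open cluster of the origin has diameter k < N, then there is a vertex at distance at most k + 1 from the origin that belongs to a giant cluster (a final open cluster of diameter ≥ N). -/

import Mathlib

open MeasureTheory ProbabilityTheory Filter Set
open scoped ENNReal

namespace Frozen

/-- Vertices of the square lattice. -/
abbrev V : Type := ℤ × ℤ

/-- Nearest-neighbour adjacency on `ℤ²`. -/
def adj (v w : V) : Prop := |v.1 - w.1| + |v.2 - w.2| = 1

/-- Edges of the square lattice, oriented rightwards or upwards so that each
(unordered) nearest-neighbour edge is represented exactly once. -/
def Edge : Type := {e : V × V // e.2 = e.1 + (1, 0) ∨ e.2 = e.1 + (0, 1)}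

/-- `e` is the edge with endpoints `x` and `y`. -/
def EdgeOf (x y : V) (e : Edge) : Prop := e.1 = (x, y) ∨ e.1 = (y, x)

/-- Connectivity via a set `A` of edges. -/
def ConnIn (A : Set Edge) : V → V → Prop :=
  Relation.ReflTransGen (fun x y => ∃ e ∈ A, EdgeOf x y e)

/-- The cluster of `v` in the graph whose open edges are `A`. -/
def cluster (A : Set Edge) (v : V) : Set V := {w | ConnIn A v w}

/-- Distance on the lattice: `|v - w| = max(|v₁-w₁|, |v₂-w₂|)`. -/
def vdist (v w : V) : ℕ := max (v.1 - w.1).natAbs (v.2 - w.2).natAbs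

/-- Diameter of a set of vertices, `sup {|v-w| : v,w ∈ W}`, as an extended real. -/
noncomputable def diam (W : Set V) : ℝ≥0∞ :=
  ⨆ v ∈ W, ⨆ w ∈ W, (vdist v w : ℝ≥0∞)

/-- `F` (the set of edges that ever open) is a realization of the `N`-parameter frozen
percolation process with edge labels `τ`: an edge `e` opens (at time `τ e`) iff at that time
neither of its endpoints lies in an open cluster of diameter `≥ N`, where the edges open just
before time `τ e` are those `f ∈ F` with `τ f < τ e`. -/
def IsFrozenEvolution (N : ℕ) (τ : Edge → ℝ) (F : Set Edge) : Prop :=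
  ∀ e : Edge, e ∈ F ↔
    (diam (cluster {f ∈ F | τ f < τ e} e.1.1) < N ∧
     diam (cluster {f ∈ F | τ f < τ e} e.1.2) < N)

/-- Embedding of lattice vertices in the plane. -/
def toR2 (v : V) : ℝ × ℝ := ((v.1 : ℝ), (v.2 : ℝ))

/-- Embedding of dual lattice vertices (indexed by `ℤ²`) in the plane: `v + (1/2, 1/2)`. -/
noncomputable def dualToR2 (d : V) : ℝ × ℝ := ((d.1 : ℝ) + 1/2, (d.2 : ℝ) + 1/2)

/-- The box `B(s) = [-s/2, s/2]²` (as a region of the plane). -/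
def box (s : ℝ) : Set (ℝ × ℝ) := Icc (-s/2) (s/2) ×ˢ Icc (-s/2) (s/2)

/-- An axis-parallel rectangle `[x₁,x₂] × [y₁,y₂]`. -/
def rect (x₁ x₂ y₁ y₂ : ℝ) : Set (ℝ × ℝ) := Icc x₁ x₂ ×ˢ Icc y₁ y₂

/-- The rectangle `R`: length `(l+(b-c)/2)N`, width `εN`, whose west side is a
central subsegment of the east side of `B(cN)`. -/
def regR (b c l ε N : ℝ) : Set (ℝ × ℝ) :=
  rect (c*N/2) (c*N/2 + (l + (b - c)/2)*N) (-(ε*N)/2) (ε*N/2)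

/-- `Λ = B(bN) ∪ R`. -/
def regLam (b c l ε N : ℝ) : Set (ℝ × ℝ) := box (b*N) ∪ regR b c l ε N

/-- `Λ'`: all points of the plane at distance `≤ εN` from `Λ`
(the plane `ℝ × ℝ` carries the max-metric). -/
def regLam' (b c l ε N : ℝ) : Set (ℝ × ℝ) :=
  {p | ∃ q ∈ regLam b c l ε N, dist p q ≤ ε*N}

/-- `R'`: the leftmost part, of length `4εN`, of the rectangle of width `3εN` and
length `lN` which is the part of `Λ'` sticking out of `B((b+2ε)N)`. -/
def regR' (b ε N : ℝ) : Set (ℝ × ℝ) :=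
  rect ((b/2 + ε)*N) ((b/2 + 5*ε)*N) (-(3*ε*N/2)) (3*ε*N/2)

/-- `L₁`: the rectangle whose south side is the rightmost segment of length `εN` of the
north side of `B(cN)`, and whose north side is part of the boundary of `Λ'`. -/
def regL1 (b c ε N : ℝ) : Set (ℝ × ℝ) :=
  rect (c*N/2 - ε*N) (c*N/2) (c*N/2) ((b/2 + ε)*N)

/-- `L₂`: the mirror image of `L₁` below `B(cN)`. -/
def regL2 (b c ε N : ℝ) : Set (ℝ × ℝ) :=
  rect (c*N/2 - ε*N) (c*N/2) (-((b/2 + ε)*N)) (-(c*N/2))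

/-- A set `Γ` of vertices surrounds the vertex `v`: every infinite nearest-neighbour
path started at `v` that leaves every bounded set must meet `Γ`. -/
def Surrounds (Γ : Set V) (v : V) : Prop :=
  ∀ f : ℕ → V, f 0 = v → (∀ i, adj (f i) (f (i+1))) →
    (∀ M : ℕ, ∃ i, M ≤ vdist (f i) (0, 0)) → ∃ i, f i ∈ Γ

/-- The primal edge `e` is crossed by the dual edge between the dual vertices `d` and `d'`
(dual vertices are indexed by `ℤ²`, the dual vertex `d` sitting at `d + (1/2,1/2)`). -/
def DualCrosses (d d' : V) (e : Edge) : Prop :=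
  (d' = d + (1,0) ∧ e.1 = ((d.1+1, d.2), (d.1+1, d.2+1))) ∨
  (d = d' + (1,0) ∧ e.1 = ((d'.1+1, d'.2), (d'.1+1, d'.2+1))) ∨
  (d' = d + (0,1) ∧ e.1 = ((d.1, d.2+1), (d.1+1, d.2+1))) ∨
  (d = d' + (0,1) ∧ e.1 = ((d'.1, d'.2+1), (d'.1+1, d'.2+1)))

/-- A dual circuit `π` surrounds the vertex `v`: every infinite nearest-neighbour path
started at `v` that leaves every bounded set uses some primal edge crossed by `π`. -/
def DualSurrounds {n : ℕ} (π : ZMod n → V) (v : V) : Prop :=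
  ∀ f : ℕ → V, f 0 = v → (∀ i, adj (f i) (f (i+1))) →
    (∀ M : ℕ, ∃ i, M ≤ vdist (f i) (0, 0)) →
    ∃ i, ∃ j : ZMod n, ∃ e : Edge, EdgeOf (f i) (f (i+1)) e ∧ DualCrosses (π j) (π (j+1)) e

/-- A `t`-open lattice path (with respect to the labels `τ`). -/
def OpenPath (τ : Edge → ℝ) (t : ℝ) {k : ℕ} (p : Fin (k+1) → V) : Prop :=
  ∀ i : Fin k, ∃ e : Edge, EdgeOf (p i.castSucc) (p i.succ) e ∧ τ e < t

/-- A `t`-closed dual lattice path. -/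
def ClosedDualPath (τ : Edge → ℝ) (t : ℝ) {k : ℕ} (q : Fin (k+1) → V) : Prop :=
  ∀ i : Fin k, ∃ e : Edge, DualCrosses (q i.castSucc) (q i.succ) e ∧ t ≤ τ e

/-- A `t`-open circuit (closed path). -/
def OpenCircuit (τ : Edge → ℝ) (t : ℝ) {n : ℕ} (γ : ZMod n → V) : Prop :=
  ∀ i : ZMod n, ∃ e : Edge, EdgeOf (γ i) (γ (i+1)) e ∧ τ e < t

/-- A `t`-closed dual circuit. -/
def ClosedDualCircuit (τ : Edge → ℝ) (t : ℝ) {n : ℕ} (π : ZMod n → V) : Prop :=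
  ∀ i : ZMod n, ∃ e : Edge, DualCrosses (π i) (π (i+1)) e ∧ t ≤ τ e

/-- There is a `t`-open horizontal crossing of the rectangle `[x₁,x₂] × [y₁,y₂]`:
a `t`-open path inside the rectangle joining its left side to its right side. -/
def HorizCrossing (τ : Edge → ℝ) (t x₁ x₂ y₁ y₂ : ℝ) : Prop :=
  ∃ k : ℕ, ∃ p : Fin (k+1) → V,
    (∀ i, toR2 (p i) ∈ rect x₁ x₂ y₁ y₂) ∧ OpenPath τ t p ∧
    ((p 0).1 : ℝ) ≤ x₁ + 1 ∧ x₂ - 1 ≤ ((p (Fin.last k)).1 : ℝ)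

/-- There is a `t`-open circuit in the annulus `outer \ inner` surrounding `inner`. -/
def OpenCircuitInAnnulus (τ : Edge → ℝ) (t : ℝ) (outer inner : Set (ℝ × ℝ)) : Prop :=
  ∃ n : ℕ, 0 < n ∧ ∃ γ : ZMod n → V,
    (∀ i, toR2 (γ i) ∈ outer \ inner) ∧ OpenCircuit τ t γ ∧
    (∀ v : V, toR2 v ∈ inner → Surrounds (Set.range γ) v)

/-- There is a `t`-closed dual circuit in the annulus `outer \ inner` surrounding `inner`. -/
def ClosedDualCircuitInAnnulus (τ : Edge → ℝ) (t : ℝ) (outer inner : Set (ℝ × ℝ)) : Prop :=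
  ∃ n : ℕ, 0 < n ∧ ∃ π : ZMod n → V,
    (∀ i, dualToR2 (π i) ∈ outer \ inner) ∧ ClosedDualCircuit τ t π ∧
    (∀ v : V, toR2 v ∈ inner → DualSurrounds π v)


/-!
If every lattice edge leaving the final cluster `C` of the origin were open, `C` would contain
the whole horizontal ray from the origin and have infinite diameter. So some edge `e` with an
endpoint in `C` never opened, and by the evolution rule one endpoint of `e` then lies in a giant
cluster. Both endpoints of `e` are within distance `diam C + 1` of the origin.
-/

lemma vdist_comm (v w : V) : vdist v w = vdist w v := by
  unfold vdist
  congr 1 <;> omega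

lemma vdist_triangle (a b c : V) : vdist a c ≤ vdist a b + vdist b c := by
  unfold vdist
  omega

lemma vdist_fst_snd_le_one (e : Edge) : vdist e.1.1 e.1.2 ≤ 1 := by
  rcases e.2 with h | h <;> rw [vdist, h] <;> simp

lemma le_diam {W : Set V} {v w : V} (hv : v ∈ W) (hw : w ∈ W) :
    (vdist v w : ℝ≥0∞) ≤ diam W :=
  le_iSup₂_of_le v hv (le_iSup₂_of_le (f := fun w _ => (vdist v w : ℝ≥0∞)) w hw le_rfl)

lemma vdist_le_of_diam_eq {W : Set V} {k : ℕ} (hW : diam W = k) {v w : V} (hv : v ∈ W)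
    (hw : w ∈ W) : vdist v w ≤ k := by
  exact_mod_cast hW ▸ le_diam hv hw

lemma diam_mono {W W' : Set V} (h : W ⊆ W') : diam W ≤ diam W' :=
  iSup₂_le fun _ hv => iSup₂_le fun _ hw => le_diam (h hv) (h hw)

lemma cluster_mono {A B : Set Edge} (h : A ⊆ B) (v : V) : cluster A v ⊆ cluster B v :=
  fun _ hw => Relation.ReflTransGen.mono (fun _ _ ⟨e, he, hxy⟩ => ⟨e, h he, hxy⟩) _ _ hw

lemma mem_cluster_self (A : Set Edge) (v : V) : v ∈ cluster A v :=
  Relation.ReflTransGen.refl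

def rightEdge (v : V) : Edge := ⟨(v, v + (1, 0)), Or.inl rfl⟩

lemma add_horizontal_mem_cluster {A : Set Edge} {v : V}
    (hA : ∀ e : Edge, e.1.1 ∈ cluster A v → e ∈ A) (j : ℕ) :
    v + ((j : ℤ), 0) ∈ cluster A v := by
  induction j with
  | zero => simpa only [Nat.cast_zero, Prod.mk_zero_zero, add_zero] using mem_cluster_self A v
  | succ j ih =>
    have hstep : v + ((j : ℤ), 0) + (1, 0) = v + (((j + 1 : ℕ) : ℤ), 0) := by
      ext <;> simp [add_assoc]
    exact hstep ▸ Relation.ReflTransGen.tail ih ⟨rightEdge _, hA _ ih, Or.inl rfl⟩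

lemma exists_not_mem_of_diam_cluster_ne_top {A : Set Edge} {v : V}
    (h : diam (cluster A v) ≠ ⊤) : ∃ e : Edge, e ∉ A ∧ e.1.1 ∈ cluster A v := by
  by_contra! hA
  have hclosed : ∀ e : Edge, e.1.1 ∈ cluster A v → e ∈ A :=
    fun e he => by_contra fun h => hA e h he
  refine h (ENNReal.eq_top_of_forall_nnreal_le fun r => ?_)
  obtain ⟨j, hj⟩ := exists_nat_ge r
  have hdist : vdist (v + ((j : ℤ), 0)) v = j := by simp [vdist]
  calc (r : ℝ≥0∞) ≤ j := by exact_mod_cast hj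
    _ = vdist (v + ((j : ℤ), 0)) v := by rw [hdist]
    _ ≤ diam (cluster A v) :=
      le_diam (add_horizontal_mem_cluster hclosed j) (mem_cluster_self A v)

lemma IsFrozenEvolution.le_diam_cluster_of_not_mem {N : ℕ} {τ : Edge → ℝ} {F : Set Edge}
    (hF : IsFrozenEvolution N τ F) {e : Edge} (he : e ∉ F) :
    (N : ℝ≥0∞) ≤ diam (cluster F e.1.1) ∨ (N : ℝ≥0∞) ≤ diam (cluster F e.1.2) := by
  have hearlier : {f ∈ F | τ f < τ e} ⊆ F := fun _ hf => hf.1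
  have hfrozen := mt (hF e).mpr he
  rw [not_and_or, not_lt, not_lt] at hfrozen
  exact hfrozen.imp (·.trans (diam_mono (cluster_mono hearlier _)))
    (·.trans (diam_mono (cluster_mono hearlier _)))

theorem statement4_general (N : ℕ) (τ : Edge → ℝ) (F : Set Edge) (hF : IsFrozenEvolution N τ F)
    (k : ℕ) (hdiam : diam (cluster F (0, 0)) = (k : ℝ≥0∞)) :
    ∃ w : V, vdist w (0, 0) ≤ k + 1 ∧ (N : ℝ≥0∞) ≤ diam (cluster F w) := by
  obtain ⟨e, heF, he⟩ := exists_not_mem_of_diam_cluster_ne_top (hdiam ▸ ENNReal.natCast_ne_top k)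
  have hfst : vdist e.1.1 (0, 0) ≤ k := vdist_le_of_diam_eq hdiam he (mem_cluster_self F _)
  have hsnd : vdist e.1.2 (0, 0) ≤ k + 1 :=
    calc vdist e.1.2 (0, 0) ≤ vdist e.1.2 e.1.1 + vdist e.1.1 (0, 0) := vdist_triangle _ _ _
      _ ≤ 1 + k := add_le_add (vdist_comm e.1.1 e.1.2 ▸ vdist_fst_snd_le_one e) hfst
      _ = k + 1 := add_comm 1 k
  rcases hF.le_diam_cluster_of_not_mem heF with h | h
  · exact ⟨e.1.1, by omega, h⟩
  · exact ⟨e.1.2, hsnd, h⟩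

/-- In the `N`-parameter frozen percolation process, if the final open cluster
of the origin has diameter `k < N`, then there is a vertex at distance at most `k + 1` from the
origin that belongs to a giant cluster (a final open cluster of diameter `≥ N`). -/
theorem statement4 (N : ℕ) (hN : 0 < N)
    (τ : Edge → ℝ) (hτrange : ∀ e, τ e ∈ Set.Ioo (0:ℝ) 1) (hinj : Function.Injective τ)
    (F : Set Edge) (hF : IsFrozenEvolution N τ F)
    (k : ℕ) (hk : k < N) (hdiam : diam (cluster F (0, 0)) = (k : ℝ≥0∞)) :
    ∃ w : V, vdist w (0, 0) ≤ k + 1 ∧ (N : ℝ≥0∞) ≤ diam (cluster F w) :=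
  statement4_general N τ F hF k hdiam

end Frozen
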